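/- Let P : ℝⁿ → ℝ^{n×n} be a smooth field of symmetric projection matrices (P(x)² = P(x), P(x)ᵀ = P(x)). Define the vector field T(x) whose i-th component is T_i(x) = Σ_{j,j'} (∂P_{ij}/∂x_{j'})(x)·P_{jj'}(x). Then P(x)T(x) = 0 for all x, i.e., T(x) lies in the normal space at every point. -/

import Mathlib

open Matrix

lemma pdp_zero (n : ℕ) (P : (Fin n → ℝ) → Matrix (Fin n) (Fin n) ℝ)
    (hsm : ∀ i j, ContDiff ℝ (⊤ : ℕ∞) (fun y => P y i j))
    (hidem : ∀ y, P y * P y = P y)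
    (x : Fin n → ℝ) (v : Fin n → ℝ) :
    P x * (Matrix.of fun i j => fderiv ℝ (fun y => P y i j) x v) * P x = 0 := by
  have hdiff : ∀ i j, DifferentiableAt ℝ (fun y => P y i j) x :=
    fun i j => ((hsm i j).differentiable (by simp)).differentiableAt
  set D : Matrix (Fin n) (Fin n) ℝ :=
    Matrix.of fun i j => fderiv ℝ (fun y => P y i j) x v with hD
  have key : ∀ i j, D i j = ∑ k, (D i k * P x k j + P x i k * D k j) := by
    intro i j
    have heq : (fun y => P y i j) = fun y => ∑ k, P y i k * P y k j := by
      funext y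
      conv_lhs => rw [← hidem y]
      rw [Matrix.mul_apply]
    have h1 : HasFDerivAt (fun y => ∑ k, P y i k * P y k j)
        (∑ k, (P x i k • fderiv ℝ (fun y => P y k j) x +
               P x k j • fderiv ℝ (fun y => P y i k) x)) x := by
      apply HasFDerivAt.fun_sum
      intro k _
      exact ((hdiff i k).hasFDerivAt).mul ((hdiff k j).hasFDerivAt)
    have h2 : fderiv ℝ (fun y => P y i j) x =
        ∑ k, (P x i k • fderiv ℝ (fun y => P y k j) x +
               P x k j • fderiv ℝ (fun y => P y i k) x) := by
      rw [heq]; exact h1.fderiv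
    have h3 := congrArg (fun L => L v) h2
    simp only [ContinuousLinearMap.coe_sum', Finset.sum_apply,
      ContinuousLinearMap.add_apply, ContinuousLinearMap.coe_smul',
      Pi.smul_apply, smul_eq_mul] at h3
    simp only [hD, Matrix.of_apply]
    rw [h3]
    congr 1
    funext k
    ring
  have hrel : D = D * P x + P x * D := by
    ext i j
    rw [key i j]
    simp [Matrix.mul_apply, Matrix.add_apply, Finset.sum_add_distrib]
  have h2 : P x * D * P x = P x * D * P x + P x * D * P x := by
    conv_lhs => rw [hrel]
    simp only [mul_add, add_mul, ← Matrix.mul_assoc]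
    rw [Matrix.mul_assoc (P x * D) (P x) (P x)]
    simp only [hidem x]
  have h3 : P x * D * P x + 0 = P x * D * P x + P x * D * P x := by
    rw [add_zero]; exact h2
  exact (add_left_cancel h3).symm

/-- For a smooth field of symmetric projection matrices `P`, the vector field
`T_i(x) = Σ_{j,j'} (∂P_{ij}/∂x_{j'})(x) P_{jj'}(x)` satisfies `P(x) T(x) = 0`. -/
theorem stmt4 (n : ℕ) (P : (Fin n → ℝ) → Matrix (Fin n) (Fin n) ℝ)
    (hsm : ∀ i j, ContDiff ℝ (⊤ : ℕ∞) (fun y => P y i j))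
    (hidem : ∀ y, P y * P y = P y)
    (hsymm : ∀ y, (P y)ᵀ = P y)
    (x : Fin n → ℝ) (T : Fin n → ℝ)
    (hT : ∀ i, T i = ∑ j, ∑ j',
      fderiv ℝ (fun y => P y i j) x (Pi.single j' 1) * P x j j') :
    (P x).mulVec T = 0 := by
  funext i
  have haux : ∀ v i0 j0,
      (P x * (Matrix.of fun a b => fderiv ℝ (fun y => P y a b) x (Pi.single v 1)) * P x) i0 j0
        = 0 := by
    intro v i0 j0
    rw [pdp_zero n P hsm hidem x (Pi.single v 1)]
    rfl
  have hentry : ∀ v, ∑ j, (∑ m, P x i m * fderiv ℝ (fun y => P y m j) x (Pi.single v 1)) * P x j v = 0 := by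
    intro v
    have := haux v i v
    simpa [Matrix.mul_apply] using this
  show ∑ m, P x i m * T m = 0
  simp only [hT, Finset.mul_sum]
  -- goal: ∑ m, ∑ j, ∑ j', P x i m * (fderiv ... * P x j j') = 0
  have step1 : (∑ m : Fin n, ∑ j : Fin n, ∑ j' : Fin n,
        P x i m * (fderiv ℝ (fun y => P y m j) x (Pi.single j' 1) * P x j j'))
      = ∑ m : Fin n, ∑ j' : Fin n, ∑ j : Fin n,
        P x i m * (fderiv ℝ (fun y => P y m j) x (Pi.single j' 1) * P x j j') :=
    Finset.sum_congr rfl fun m _ => Finset.sum_comm ..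
  rw [step1, Finset.sum_comm]
  refine Finset.sum_eq_zero fun v _ => ?_
  rw [Finset.sum_comm]
  have hsw : ∀ j : Fin n, ∑ m, P x i m * (fderiv ℝ (fun y => P y m j) x (Pi.single v 1) * P x j v)
      = (∑ m, P x i m * fderiv ℝ (fun y => P y m j) x (Pi.single v 1)) * P x j v := by
    intro j
    rw [Finset.sum_mul]
    exact Finset.sum_congr rfl fun m _ => by ring
  simp only [hsw]
  exact hentry v
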